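/- Composition of star-couplings through kernels: suppose that for every pair (a₁,a₂) ∈ A × A there is a star-coupling ν_{a₁,a₂} of kernel outputs k₁(a₁) and k₂(a₂) with E_{ν_{a₁,a₂}}[g⋆] ≤ f(a₁,a₂). Then for every star-coupling μ of sub-distributions d₁ and d₂, there exists a star-coupling ν of the pushforwards (d₁ >>= k₁) and (d₂ >>= k₂) such that E_μ[f⋆] ≥ E_ν[g⋆]. -/
import Mathlib

open scoped ENNReal
open Filter

set_option linter.unusedSectionVars false

noncomputable section

/-- Total mass of a discrete (sub-)distribution. -/
def mass {A : Type*} (d : A → ℝ≥0∞) : ℝ≥0∞ := ∑' a, d a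

/-- A sub-distribution: total mass at most one. -/
def IsSubDist {A : Type*} (d : A → ℝ≥0∞) : Prop := mass d ≤ 1

/-- First marginal. -/
def fstMarg {A B : Type*} (μ : A × B → ℝ≥0∞) : A → ℝ≥0∞ := fun a => ∑' b, μ (a, b)

/-- Second marginal. -/
def sndMarg {A B : Type*} (μ : A × B → ℝ≥0∞) : B → ℝ≥0∞ := fun b => ∑' a, μ (a, b)

/-- A coupling of `d₁` and `d₂`: a joint (sub-)distribution whose marginals are `d₁`, `d₂`. -/
def IsCoupling {A B : Type*} (μ : A × B → ℝ≥0∞) (d₁ : A → ℝ≥0∞) (d₂ : B → ℝ≥0∞) : Prop :=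
  fstMarg μ = d₁ ∧ sndMarg μ = d₂

/-- Extension `d⋆` of a sub-distribution to `A ⊎ {⋆}` (modelled as `Option A`),
placing the missing mass on `⋆ = none`. -/
def starExt {A : Type*} (d : A → ℝ≥0∞) : Option A → ℝ≥0∞
  | none => 1 - mass d
  | some a => d a

/-- A `⋆`-coupling of `d₁` and `d₂`: a full distribution on `A⋆ × B⋆`
whose marginals are `d₁⋆` and `d₂⋆`. -/
def IsStarCoupling {A B : Type*} (μ : Option A × Option B → ℝ≥0∞)
    (d₁ : A → ℝ≥0∞) (d₂ : B → ℝ≥0∞) : Prop :=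
  mass μ = 1 ∧ fstMarg μ = starExt d₁ ∧ sndMarg μ = starExt d₂

/-- Extension `f⋆` of a nonnegative function to `A⋆ × B⋆`, zero on pairs involving `⋆`. -/
def fstar {A B : Type*} (f : A × B → ℝ≥0∞) : Option A × Option B → ℝ≥0∞
  | (some a, some b) => f (a, b)
  | _ => 0

/-- Expected value of `f` under `d`. -/
def expec {A : Type*} (d : A → ℝ≥0∞) (f : A → ℝ≥0∞) : ℝ≥0∞ := ∑' a, d a * f a

/-- Probability of an event under `d`. -/
def evP {A : Type*} (d : A → ℝ≥0∞) (E : Set A) : ℝ≥0∞ := ∑' a, E.indicator d a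

/-- Total variation distance (with `|x - y|` rendered as `(x - y) ⊔ (y - x)` in `ℝ≥0∞`). -/
def tv {A : Type*} (d₁ d₂ : A → ℝ≥0∞) : ℝ≥0∞ :=
  ⨆ E : Set A, (evP d₁ E - evP d₂ E) ⊔ (evP d₂ E - evP d₁ E)

/- ### Auxiliary material -/

lemma tsum_option_ennreal {A : Type*} (f : Option A → ℝ≥0∞) :
    ∑' o, f o = f none + ∑' a, f (some a) := by
  classical
  rw [ENNReal.tsum_eq_add_tsum_ite none]
  congr 1
  apply tsum_eq_tsum_of_ne_zero_bij (fun a => some a.1)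
  · intro x y h; exact Subtype.ext (Option.some_injective _ h)
  · intro o ho
    rcases o with _ | a
    · simp at ho
    · rw [Function.mem_support, if_neg (by simp)] at ho
      exact ⟨⟨a, ho⟩, rfl⟩
  · intro x; simp

/-- Dirac at `⋆ = none`. -/
def Dstar {A : Type*} : Option A → ℝ≥0∞ := fun o => Option.elim o 1 (fun _ => 0)

lemma mass_Dstar {A : Type*} : mass (Dstar (A := A)) = 1 := by
  unfold mass
  rw [tsum_option_ennreal]
  simp [Dstar]

lemma mass_starExt {A : Type*} {d : A → ℝ≥0∞} (hd : IsSubDist d) : mass (starExt d) = 1 := by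
  unfold mass
  rw [tsum_option_ennreal]
  show (1 - mass d) + (∑' a, d a) = 1
  rw [show (∑' a, d a) = mass d from rfl]
  exact tsub_add_cancel_of_le hd

lemma mass_prod {A B : Type*} (u : A → ℝ≥0∞) (v : B → ℝ≥0∞) :
    mass (fun q : A × B => u q.1 * v q.2) = mass u * mass v := by
  calc mass (fun q : A × B => u q.1 * v q.2)
      = ∑' a, ∑' b, u a * v b := ENNReal.tsum_prod' (f := fun q : A × B => u q.1 * v q.2)
    _ = ∑' a, u a * mass v := tsum_congr fun a => ENNReal.tsum_mul_left
    _ = mass u * mass v := ENNReal.tsum_mul_right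

lemma fstMarg_prod {A B : Type*} (u : A → ℝ≥0∞) (v : B → ℝ≥0∞) :
    fstMarg (fun q : A × B => u q.1 * v q.2) = fun a => u a * mass v := by
  funext a
  show (∑' b, u a * v b) = u a * ∑' b, v b
  exact ENNReal.tsum_mul_left

lemma sndMarg_prod {A B : Type*} (u : A → ℝ≥0∞) (v : B → ℝ≥0∞) :
    sndMarg (fun q : A × B => u q.1 * v q.2) = fun b => mass u * v b := by
  funext b
  show (∑' a, u a * v b) = (∑' a, u a) * v b
  exact ENNReal.tsum_mul_right

lemma fstar_none_left {A B : Type*} (f : A × B → ℝ≥0∞) (x : Option B) :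
    fstar f (none, x) = 0 := by cases x <;> rfl

lemma fstar_none_right {A B : Type*} (f : A × B → ℝ≥0∞) (x : Option A) :
    fstar f (x, none) = 0 := by cases x <;> rfl

/-- Extension of the kernel family to pairs involving `⋆`. -/
def Kaux {A : Type*} (k₁ k₂ : A → A → ℝ≥0∞)
    (ν : A → A → Option A × Option A → ℝ≥0∞) :
    Option A × Option A → Option A × Option A → ℝ≥0∞
  | (some a₁, some a₂) => ν a₁ a₂
  | (some a₁, none) => fun q => starExt (k₁ a₁) q.1 * Dstar q.2
  | (none, some a₂) => fun q => Dstar q.1 * starExt (k₂ a₂) q.2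
  | (none, none) => fun q => Dstar q.1 * Dstar q.2

section KauxLemmas

variable {A : Type*} {k₁ k₂ : A → A → ℝ≥0∞} {ν : A → A → Option A × Option A → ℝ≥0∞}
variable (hk₁ : ∀ a, IsSubDist (k₁ a)) (hk₂ : ∀ a, IsSubDist (k₂ a))
variable (hν : ∀ a₁ a₂, IsStarCoupling (ν a₁ a₂) (k₁ a₁) (k₂ a₂))

include hk₁ hk₂ hν in
lemma mass_Kaux : ∀ p, mass (Kaux k₁ k₂ ν p) = 1 := by
  rintro ⟨_ | a₁, _ | a₂⟩
  · show mass (fun q : Option A × Option A => Dstar q.1 * Dstar q.2) = 1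
    rw [mass_prod, mass_Dstar, one_mul]
  · show mass (fun q : Option A × Option A => Dstar q.1 * starExt (k₂ a₂) q.2) = 1
    rw [mass_prod, mass_Dstar, mass_starExt (hk₂ a₂), one_mul]
  · show mass (fun q : Option A × Option A => starExt (k₁ a₁) q.1 * Dstar q.2) = 1
    rw [mass_prod, mass_Dstar, mass_starExt (hk₁ a₁), one_mul]
  · exact (hν a₁ a₂).1

include hk₁ hk₂ hν in
lemma fstMarg_Kaux : ∀ p, fstMarg (Kaux k₁ k₂ ν p) =
    Option.elim p.1 Dstar (fun a₁ => starExt (k₁ a₁)) := by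
  rintro ⟨_ | a₁, _ | a₂⟩
  · show fstMarg (fun q : Option A × Option A => Dstar q.1 * Dstar q.2) = _
    rw [fstMarg_prod, mass_Dstar]
    funext b; simp
  · show fstMarg (fun q : Option A × Option A => Dstar q.1 * starExt (k₂ a₂) q.2) = _
    rw [fstMarg_prod, mass_starExt (hk₂ a₂)]
    funext b; simp
  · show fstMarg (fun q : Option A × Option A => starExt (k₁ a₁) q.1 * Dstar q.2) = _
    rw [fstMarg_prod, mass_Dstar]
    funext b; simp
  · exact (hν a₁ a₂).2.1

include hk₁ hk₂ hν in
lemma sndMarg_Kaux : ∀ p, sndMarg (Kaux k₁ k₂ ν p) =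
    Option.elim p.2 Dstar (fun a₂ => starExt (k₂ a₂)) := by
  rintro ⟨_ | a₁, _ | a₂⟩
  · show sndMarg (fun q : Option A × Option A => Dstar q.1 * Dstar q.2) = _
    rw [sndMarg_prod, mass_Dstar]
    funext b; simp
  · show sndMarg (fun q : Option A × Option A => Dstar q.1 * starExt (k₂ a₂) q.2) = _
    rw [sndMarg_prod, mass_Dstar]
    funext b; simp
  · show sndMarg (fun q : Option A × Option A => starExt (k₁ a₁) q.1 * Dstar q.2) = _
    rw [sndMarg_prod, mass_starExt (hk₁ a₁)]
    funext b; simp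
  · exact (hν a₁ a₂).2.2

lemma expec_Kaux {f g : A × A → ℝ≥0∞}
    (hνf : ∀ a₁ a₂, expec (ν a₁ a₂) (fstar g) ≤ f (a₁, a₂)) :
    ∀ p, expec (Kaux k₁ k₂ ν p) (fstar g) ≤ fstar f p := by
  rintro ⟨_ | a₁, _ | a₂⟩
  · refine le_of_eq (ENNReal.tsum_eq_zero.mpr ?_)
    rintro ⟨q₁, q₂⟩
    cases q₁ <;> cases q₂ <;> simp [Kaux, Dstar, fstar_none_left, fstar_none_right]
  · refine le_of_eq (ENNReal.tsum_eq_zero.mpr ?_)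
    rintro ⟨q₁, q₂⟩
    cases q₁ <;> cases q₂ <;> simp [Kaux, Dstar, fstar_none_left, fstar_none_right]
  · refine le_of_eq (ENNReal.tsum_eq_zero.mpr ?_)
    rintro ⟨q₁, q₂⟩
    cases q₁ <;> cases q₂ <;> simp [Kaux, Dstar, fstar_none_left, fstar_none_right]
  · exact hνf a₁ a₂

end KauxLemmas

/-- composition of ⋆-couplings through kernels (monadic bind). -/
theorem starCoupling_bind {A : Type*} [Countable A]
    (d₁ d₂ : A → ℝ≥0∞) (hd₁ : IsSubDist d₁) (hd₂ : IsSubDist d₂)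
    (k₁ k₂ : A → A → ℝ≥0∞) (hk₁ : ∀ a, IsSubDist (k₁ a)) (hk₂ : ∀ a, IsSubDist (k₂ a))
    (f g : A × A → ℝ≥0∞)
    (hkernels : ∀ a₁ a₂ : A, ∃ ν : Option A × Option A → ℝ≥0∞,
      IsStarCoupling ν (k₁ a₁) (k₂ a₂) ∧ expec ν (fstar g) ≤ f (a₁, a₂))
    (μ : Option A × Option A → ℝ≥0∞) (hμ : IsStarCoupling μ d₁ d₂) :
    ∃ ν : Option A × Option A → ℝ≥0∞,
      IsStarCoupling ν (fun b => ∑' a, d₁ a * k₁ a b) (fun b => ∑' a, d₂ a * k₂ a b) ∧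
      expec ν (fstar g) ≤ expec μ (fstar f) := by
  classical
  obtain ⟨hμmass, hμ1, hμ2⟩ := hμ
  choose ν hν hνf using hkernels
  set db₁ : A → ℝ≥0∞ := fun b => ∑' a, d₁ a * k₁ a b with hdb₁
  set db₂ : A → ℝ≥0∞ := fun b => ∑' a, d₂ a * k₂ a b with hdb₂
  set K : Option A × Option A → Option A × Option A → ℝ≥0∞ := Kaux k₁ k₂ ν with hKdef
  set w : Option A × Option A → ℝ≥0∞ := fun q => ∑' p, μ p * K p q with hw
  -- basic swap computations
  have hmassw0 : mass w = ∑' p, μ p * mass (K p) := by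
    unfold mass
    rw [ENNReal.tsum_comm]
    exact tsum_congr fun p => ENNReal.tsum_mul_left
  have hfst : ∀ b, fstMarg w b = ∑' p, μ p * fstMarg (K p) b := by
    intro b
    unfold fstMarg
    rw [ENNReal.tsum_comm]
    exact tsum_congr fun p => ENNReal.tsum_mul_left
  have hsnd : ∀ b, sndMarg w b = ∑' p, μ p * sndMarg (K p) b := by
    intro b
    unfold sndMarg
    rw [ENNReal.tsum_comm]
    exact tsum_congr fun p => ENNReal.tsum_mul_left
  have hKmass := mass_Kaux hk₁ hk₂ hν
  have hKfst := fstMarg_Kaux hk₁ hk₂ hν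
  have hKsnd := sndMarg_Kaux hk₁ hk₂ hν
  -- total mass one
  have hmassw : mass w = 1 := by
    rw [hmassw0]
    calc ∑' p, μ p * mass (K p) = ∑' p, μ p * 1 := tsum_congr fun p => by rw [hKmass p]
      _ = mass μ := by simp [mass]
      _ = 1 := hμmass
  -- marginals on `some`
  have hfst_some : ∀ b, fstMarg w (some b) = db₁ b := by
    intro b
    rw [hfst, ENNReal.tsum_prod' (f := fun p : Option A × Option A => μ p * fstMarg (K p) (some b)), tsum_option_ennreal]
    have h0 : (∑' p₂ : Option A, μ (none, p₂) * fstMarg (K (none, p₂)) (some b)) = 0 := by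
      apply ENNReal.tsum_eq_zero.mpr
      intro p₂
      rw [hKfst (none, p₂)]
      simp [Dstar]
    rw [h0, zero_add]
    apply tsum_congr; intro a₁
    calc (∑' p₂ : Option A, μ (some a₁, p₂) * fstMarg (K (some a₁, p₂)) (some b))
        = ∑' p₂ : Option A, μ (some a₁, p₂) * k₁ a₁ b := by
          apply tsum_congr; intro p₂; rw [hKfst (some a₁, p₂)]; rfl
      _ = (∑' p₂ : Option A, μ (some a₁, p₂)) * k₁ a₁ b := ENNReal.tsum_mul_right
      _ = d₁ a₁ * k₁ a₁ b := by
          rw [show (∑' p₂ : Option A, μ (some a₁, p₂)) = fstMarg μ (some a₁) from rfl, hμ1]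
          rfl
  have hsnd_some : ∀ b, sndMarg w (some b) = db₂ b := by
    intro b
    rw [hsnd, ENNReal.tsum_prod' (f := fun p : Option A × Option A => μ p * sndMarg (K p) (some b)),
      ENNReal.tsum_comm, tsum_option_ennreal]
    have h0 : (∑' p₁ : Option A, μ (p₁, none) * sndMarg (K (p₁, none)) (some b)) = 0 := by
      apply ENNReal.tsum_eq_zero.mpr
      intro p₁
      rw [hKsnd (p₁, none)]
      simp [Dstar]
    rw [h0, zero_add]
    apply tsum_congr; intro a₂
    calc (∑' p₁ : Option A, μ (p₁, some a₂) * sndMarg (K (p₁, some a₂)) (some b))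
        = ∑' p₁ : Option A, μ (p₁, some a₂) * k₂ a₂ b := by
          apply tsum_congr; intro p₁; rw [hKsnd (p₁, some a₂)]; rfl
      _ = (∑' p₁ : Option A, μ (p₁, some a₂)) * k₂ a₂ b := ENNReal.tsum_mul_right
      _ = d₂ a₂ * k₂ a₂ b := by
          rw [show (∑' p₁ : Option A, μ (p₁, some a₂)) = sndMarg μ (some a₂) from rfl, hμ2]
          rfl
  -- masses of bound marginals
  have hmass_db₁ : mass db₁ ≤ 1 := by
    unfold mass
    calc ∑' b, db₁ b = ∑' a, ∑' b, d₁ a * k₁ a b := ENNReal.tsum_comm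
      _ = ∑' a, d₁ a * mass (k₁ a) := tsum_congr fun a => ENNReal.tsum_mul_left
      _ ≤ ∑' a, d₁ a * 1 := ENNReal.tsum_le_tsum fun a => mul_le_mul_right (hk₁ a) _
      _ = mass d₁ := by simp [mass]
      _ ≤ 1 := hd₁
  have hmass_db₂ : mass db₂ ≤ 1 := by
    unfold mass
    calc ∑' b, db₂ b = ∑' a, ∑' b, d₂ a * k₂ a b := ENNReal.tsum_comm
      _ = ∑' a, d₂ a * mass (k₂ a) := tsum_congr fun a => ENNReal.tsum_mul_left
      _ ≤ ∑' a, d₂ a * 1 := ENNReal.tsum_le_tsum fun a => mul_le_mul_right (hk₂ a) _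
      _ = mass d₂ := by simp [mass]
      _ ≤ 1 := hd₂
  -- marginal at none via total mass
  have hmass_fst : (∑' o : Option A, fstMarg w o) = 1 := by
    calc (∑' o : Option A, fstMarg w o) = ∑' p, w p := (ENNReal.tsum_prod' (f := w)).symm
      _ = 1 := hmassw
  have hfst_none : fstMarg w none = 1 - mass db₁ := by
    apply ENNReal.eq_sub_of_add_eq (lt_of_le_of_lt hmass_db₁ ENNReal.one_lt_top).ne
    rw [tsum_option_ennreal] at hmass_fst
    rw [← hmass_fst]
    congr 1
    exact tsum_congr fun b => (hfst_some b).symm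
  have hmass_snd : (∑' o : Option A, sndMarg w o) = 1 := by
    calc (∑' o : Option A, sndMarg w o)
        = ∑' (b : Option A), ∑' (a : Option A), w (a, b) := rfl
      _ = ∑' (a : Option A), ∑' (b : Option A), w (a, b) := ENNReal.tsum_comm
      _ = ∑' p, w p := (ENNReal.tsum_prod' (f := w)).symm
      _ = 1 := hmassw
  have hsnd_none : sndMarg w none = 1 - mass db₂ := by
    apply ENNReal.eq_sub_of_add_eq (lt_of_le_of_lt hmass_db₂ ENNReal.one_lt_top).ne
    rw [tsum_option_ennreal] at hmass_snd
    rw [← hmass_snd]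
    congr 1
    exact tsum_congr fun b => (hsnd_some b).symm
  -- expectation bound
  have hexp : expec w (fstar g) ≤ expec μ (fstar f) := by
    unfold expec
    calc ∑' q, w q * fstar g q
        = ∑' q, ∑' p, μ p * K p q * fstar g q :=
          tsum_congr fun q => ENNReal.tsum_mul_right.symm
      _ = ∑' p, ∑' q, μ p * K p q * fstar g q := ENNReal.tsum_comm
      _ = ∑' p, μ p * expec (K p) (fstar g) := by
          apply tsum_congr; intro p
          simp_rw [mul_assoc]
          exact ENNReal.tsum_mul_left
      _ ≤ ∑' p, μ p * fstar f p :=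
          ENNReal.tsum_le_tsum fun p => mul_le_mul_right (expec_Kaux hνf p) _
  refine ⟨w, ⟨hmassw, ?_, ?_⟩, hexp⟩
  · funext o
    cases o with
    | none => exact hfst_none
    | some b => exact hfst_some b
  · funext o
    cases o with
    | none => exact hsnd_none
    | some b => exact hsnd_some b
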